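/- arXiv:2406.18188 — 8 statements merged into one kernel-verified Lean document; each statement's English description precedes it below -/
import Mathlib

section
/- Let N ≥ 4 be even. If 4 divides N, then M₄(N/2,N/2,N/2,N/2) = Id over ℤ/Nℤ, and 4 is the least positive n such that M_n(N/2,...,N/2) = ±Id. If 4 does not divide N, then M₆(N/2,...,N/2) = -Id over ℤ/Nℤ, and 6 is the least positive n such that M_n(N/2,...,N/2) = ±Id. -/
def matE {N : ℕ} (a : ZMod N) : Matrix (Fin 2) (Fin 2) (ZMod N) := !![a, -1; 1, 0]

/-- `M_m(k,…,k) = ±Id` over `ℤ/Nℤ` (constant tuple, so a matrix power). -/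
def isMonSol {N : ℕ} (k : ZMod N) (m : ℕ) : Prop :=
  matE k ^ m = 1 ∨ matE k ^ m = -1

/-- `r` is the size of the `k`-monomial minimal solution modulo `N`. -/
def minMonSize {N : ℕ} (k : ZMod N) (r : ℕ) : Prop :=
  0 < r ∧ isMonSol k r ∧ ∀ m, 0 < m → isMonSol k m → r ≤ m

/-!
The entries of `M_n(k,…,k)` are continuants, i.e. values at `k` of the rescaled Chebyshev
polynomials `Sₙ` (`S₋₁ = 0`, `S₀ = 1`, `Sₙ₊₂ = X Sₙ₊₁ - Sₙ`):
`matE k ^ n = !![Sₙ(k), -Sₙ₋₁(k); Sₙ₋₁(k), -Sₙ₋₂(k)]`. Thus `M_n = ±Id` forces `Sₙ₋₁(k) = 0`,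
and the problem reduces to running the recursion at `k = N/2`. There `2k = 0`, and `k² = 0` if
`4 ∣ N` while `k² = k` otherwise; the values `Sₙ(k)` for `n = 0, 1, 2, …` are
`1, k, -1, 0, 1` in the first case and `1, k, k - 1, k, 1, 0, -1` in the second.
-/

open Polynomial Polynomial.Chebyshev

section Chebyshev

variable {R : Type*} [CommRing R]

theorem eval_S_add_two (x : R) (n : ℤ) :
    (S R (n + 2)).eval x = x * (S R (n + 1)).eval x - (S R n).eval x := by
  simp

theorem eval_S_of_mul_self_eq_zero {x : R} (h2 : x + x = 0) (hxx : x * x = 0) :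
    (S R 2).eval x = -1 ∧ (S R 3).eval x = 0 ∧ (S R 4).eval x = 1 := by
  have s2 : (S R 2).eval x = -1 := by simp [S_two, sq, hxx]
  have s3 : (S R 3).eval x = 0 := by
    rw [show (3 : ℤ) = 1 + 2 by norm_num, eval_S_add_two]
    norm_num [s2]
    linear_combination -h2
  have s4 : (S R 4).eval x = 1 := by
    rw [show (4 : ℤ) = 2 + 2 by norm_num, eval_S_add_two]
    norm_num [s2, s3]
  exact ⟨s2, s3, s4⟩

theorem eval_S_of_mul_self_eq_self {x : R} (h2 : x + x = 0) (hxx : x * x = x) :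
    (S R 2).eval x = x - 1 ∧ (S R 3).eval x = x ∧ (S R 4).eval x = 1 ∧
      (S R 5).eval x = 0 ∧ (S R 6).eval x = -1 := by
  have s2 : (S R 2).eval x = x - 1 := by simp [S_two, sq, hxx]
  have s3 : (S R 3).eval x = x := by
    rw [show (3 : ℤ) = 1 + 2 by norm_num, eval_S_add_two]
    norm_num [s2]
    linear_combination hxx - h2
  have s4 : (S R 4).eval x = 1 := by
    rw [show (4 : ℤ) = 2 + 2 by norm_num, eval_S_add_two]
    norm_num [s2, s3]
    linear_combination hxx
  have s5 : (S R 5).eval x = 0 := by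
    rw [show (5 : ℤ) = 3 + 2 by norm_num, eval_S_add_two]
    norm_num [s3, s4]
  have s6 : (S R 6).eval x = -1 := by
    rw [show (6 : ℤ) = 4 + 2 by norm_num, eval_S_add_two]
    norm_num [s4, s5]
  exact ⟨s2, s3, s4, s5, s6⟩

end Chebyshev

section Continuant

variable {N : ℕ} {k : ZMod N}

variable (k) in
theorem matE_pow_eq_eval_S (n : ℕ) :
    matE k ^ n = !![(S (ZMod N) n).eval k, -(S (ZMod N) (n - 1)).eval k;
      (S (ZMod N) (n - 1)).eval k, -(S (ZMod N) (n - 2)).eval k] := by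
  induction n with
  | zero => simp [Matrix.one_fin_two]
  | succ n ih =>
    rw [pow_succ, ih, matE, Matrix.mul_fin_two, Nat.cast_succ, add_sub_cancel_right,
      show (n : ℤ) + 1 - 2 = n - 1 by ring, S_add_one, S_eq (ZMod N) n]
    ext i j
    fin_cases i <;> fin_cases j <;> simp <;> ring

theorem eval_S_eq_zero_of_isMonSol {n : ℕ} (h : isMonSol k n) :
    (S (ZMod N) (n - 1)).eval k = 0 := by
  have entry := congrArg (· 1 0) (matE_pow_eq_eval_S k n)
  rcases h with h | h <;> simpa [h] using entry.symm

theorem minMonSize_of_eval_S_ne_zero {r : ℕ} (hr : 0 < r) (hsol : isMonSol k r)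
    (hS : ∀ m : ℕ, m + 1 < r → (S (ZMod N) m).eval k ≠ 0) : minMonSize k r := by
  refine ⟨hr, hsol, fun m hm hsolm => ?_⟩
  by_contra! hlt
  have := eval_S_eq_zero_of_isMonSol hsolm
  exact hS (m - 1) (by omega) (by rwa [Nat.cast_sub hm, Nat.cast_one])

theorem matE_pow_four_and_minMonSize_four (hk2 : k + k = 0) (hkk : k * k = 0) (hk : k ≠ 0) :
    matE k ^ 4 = 1 ∧ minMonSize k 4 := by
  have := nontrivial_of_ne k 0 hk
  obtain ⟨s2, s3, s4⟩ := eval_S_of_mul_self_eq_zero hk2 hkk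
  have pow_four : matE k ^ 4 = 1 := by
    rw [matE_pow_eq_eval_S, Matrix.one_fin_two]
    norm_num [s2, s3, s4]
  refine ⟨pow_four, minMonSize_of_eval_S_ne_zero (by norm_num) (Or.inl pow_four) ?_⟩
  intro m hm
  have : m < 3 := by omega
  interval_cases m <;> simp [s2, hk]

theorem matE_pow_six_and_minMonSize_six (hk2 : k + k = 0) (hkk : k * k = k) (hk0 : k ≠ 0)
    (hk1 : k ≠ 1) : matE k ^ 6 = -1 ∧ minMonSize k 6 := by
  have := nontrivial_of_ne k 0 hk0
  obtain ⟨s2, s3, s4, s5, s6⟩ := eval_S_of_mul_self_eq_self hk2 hkk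
  have pow_six : matE k ^ 6 = -1 := by
    rw [matE_pow_eq_eval_S, Matrix.one_fin_two]
    norm_num [s4, s5, s6]
  refine ⟨pow_six, minMonSize_of_eval_S_ne_zero (by norm_num) (Or.inr pow_six) ?_⟩
  intro m hm
  have : m < 5 := by omega
  interval_cases m <;> simp [s2, s3, s4, hk0, sub_eq_zero, hk1]

end Continuant

section HalfModulus

variable {N : ℕ}

theorem natCast_half_add_self (hE : Even N) : ((N / 2 : ℕ) : ZMod N) + (N / 2 : ℕ) = 0 := by
  obtain ⟨c, rfl⟩ := hE
  rw [← Nat.cast_add, show (c + c) / 2 + (c + c) / 2 = c + c by omega, ZMod.natCast_self]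

theorem natCast_half_mul_self_of_four_dvd (h4 : 4 ∣ N) :
    ((N / 2 : ℕ) : ZMod N) * (N / 2 : ℕ) = 0 := by
  obtain ⟨m, rfl⟩ := h4
  rw [← Nat.cast_mul, ZMod.natCast_eq_zero_iff, show 4 * m / 2 = 2 * m by omega]
  exact ⟨m, by ring⟩

theorem natCast_half_mul_self_of_not_four_dvd (hE : Even N) (h4 : ¬ 4 ∣ N) :
    ((N / 2 : ℕ) : ZMod N) * (N / 2 : ℕ) = (N / 2 : ℕ) := by
  obtain ⟨j, hj⟩ : ∃ j, N = 4 * j + 2 := ⟨N / 4, by obtain ⟨c, rfl⟩ := hE; omega⟩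
  have hsq : N / 2 * (N / 2) = N / 2 + N * j := by
    rw [show N / 2 = 2 * j + 1 by omega, hj]
    ring
  rw [← Nat.cast_mul, hsq, Nat.cast_add, Nat.cast_mul, ZMod.natCast_self, zero_mul, add_zero]

theorem natCast_half_ne_zero (hN : 2 ≤ N) : ((N / 2 : ℕ) : ZMod N) ≠ 0 := by
  rw [Ne, ZMod.natCast_eq_zero_iff]
  intro h
  have := Nat.le_of_dvd (by omega) h
  omega

theorem natCast_half_ne_one (hN : 4 ≤ N) : ((N / 2 : ℕ) : ZMod N) ≠ 1 := by
  rw [← Nat.cast_one, Ne, ZMod.natCast_eq_natCast_iff', Nat.mod_eq_of_lt (by omega),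
    Nat.mod_eq_of_lt (by omega)]
  omega

end HalfModulus

theorem stmt1 (N : ℕ) (hN : 4 ≤ N) (hE : Even N) :
    (4 ∣ N → matE ((N / 2 : ℕ) : ZMod N) ^ 4 = 1 ∧
      minMonSize ((N / 2 : ℕ) : ZMod N) 4) ∧
    (¬ 4 ∣ N → matE ((N / 2 : ℕ) : ZMod N) ^ 6 = -1 ∧
      minMonSize ((N / 2 : ℕ) : ZMod N) 6) := by
  have h2k := natCast_half_add_self hE
  have hk0 := natCast_half_ne_zero (by omega : 2 ≤ N)
  exact ⟨fun h4 => matE_pow_four_and_minMonSize_four h2k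
      (natCast_half_mul_self_of_four_dvd h4) hk0,
    fun h4 => matE_pow_six_and_minMonSize_six h2k
      (natCast_half_mul_self_of_not_four_dvd hE h4) hk0 (natCast_half_ne_one hN)⟩
end

section
/- Let p be a prime, k an integer, and n ≥ 1. Let r be the size of the k̄-monomial minimal solution modulo p^n. Then the size of the k̄-monomial minimal solution modulo p^{n+1} is equal to r or to p·r. -/
section Signs

variable {R : Type*} [Ring R] {x y : R}

lemma mul_eq_one_or_neg_one (hx : x = 1 ∨ x = -1) (hy : y = 1 ∨ y = -1) :
    x * y = 1 ∨ x * y = -1 := by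
  rcases hx with rfl | rfl <;> rcases hy with rfl | rfl <;> simp

lemma pow_eq_one_or_neg_one (hx : x = 1 ∨ x = -1) (m : ℕ) : x ^ m = 1 ∨ x ^ m = -1 := by
  induction m with
  | zero => exact .inl (pow_zero x)
  | succ m ih => rw [pow_succ]; exact mul_eq_one_or_neg_one ih hx

lemma pow_mod_eq_one_or_neg_one {r m : ℕ} (hr : x ^ r = 1 ∨ x ^ r = -1)
    (hm : x ^ m = 1 ∨ x ^ m = -1) : x ^ (m % r) = 1 ∨ x ^ (m % r) = -1 := by
  set u := x ^ (r * (m / r)) with hu_def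
  have hu : u = 1 ∨ u = -1 := by rw [hu_def, pow_mul]; exact pow_eq_one_or_neg_one hr _
  have huu : u * u = 1 := by rcases hu with h | h <;> simp [h]
  have hmod : x ^ (m % r) = u * x ^ m :=
    calc x ^ (m % r) = u * u * x ^ (m % r) := by rw [huu, one_mul]
      _ = u * x ^ m := by rw [mul_assoc, hu_def, ← pow_add, Nat.div_add_mod]
  rw [hmod]
  exact mul_eq_one_or_neg_one hu hm

end Signs

lemma minMonSize.dvd {N : ℕ} {k : ZMod N} {r m : ℕ} (hr : minMonSize k r)
    (hsol : isMonSol k m) : r ∣ m := by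
  obtain ⟨hr0, hsolr, hmin⟩ := hr
  refine Nat.dvd_of_mod_eq_zero (Nat.eq_zero_of_not_pos fun hpos => ?_)
  exact (Nat.mod_lt m hr0).not_ge (hmin _ hpos (pow_mod_eq_one_or_neg_one hsolr hsol))

lemma add_pow_succ_of_mul_self_eq_zero {R : Type*} [Ring R] {E C : R} (hEC : Commute E C)
    (hC : C * C = 0) (m : ℕ) : (E + C) ^ (m + 1) = E ^ (m + 1) + (m + 1) • (E ^ m * C) := by
  induction m with
  | zero => simp
  | succ m ih =>
    have hCE : E ^ m * C * E = E ^ (m + 1) * C := by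
      rw [mul_assoc, hEC.symm.eq, ← mul_assoc, ← pow_succ]
    rw [pow_succ (E + C), ih, add_mul, smul_mul_assoc, mul_add, mul_add, hCE,
      mul_assoc (E ^ m) C C, hC, mul_zero, add_zero, ← pow_succ, succ_nsmul _ (m + 1), add_assoc,
      add_comm (E ^ (m + 1) * C)]

lemma add_pow_eq_pow_of_mul_self_eq_zero {R : Type*} [Ring R] {E C : R} (hEC : Commute E C)
    (hC : C * C = 0) {p : ℕ} (hp : p • C = 0) : (E + C) ^ p = E ^ p := by
  cases p with
  | zero => simp
  | succ m =>
    rw [add_pow_succ_of_mul_self_eq_zero hEC hC, ← mul_smul_comm, hp, mul_zero, add_zero]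

lemma ZMod.exists_eq_mul_of_castHom_eq_zero {d N : ℕ} (h : d ∣ N) {x : ZMod N}
    (hx : ZMod.castHom h (ZMod d) x = 0) : ∃ y : ZMod N, x = d * y := by
  rw [ZMod.castHom_apply, ← ZMod.intCast_cast, ZMod.intCast_zmod_eq_zero_iff_dvd] at hx
  obtain ⟨t, ht⟩ := hx
  exact ⟨(t : ZMod N), by rw [← ZMod.intCast_zmod_cast x, ht]; push_cast; rfl⟩

lemma matE_map_castHom {d N : ℕ} (h : d ∣ N) (a : ZMod N) :
    (ZMod.castHom h (ZMod d)).mapMatrix (matE a) = matE (ZMod.castHom h (ZMod d) a) := by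
  ext i j
  fin_cases i <;> fin_cases j <;> simp [matE, -ZMod.castHom_apply]

lemma isMonSol.castHom {d N : ℕ} (h : d ∣ N) {a : ZMod N} {m : ℕ} (hsol : isMonSol a m) :
    isMonSol (ZMod.castHom h (ZMod d) a) m := by
  unfold isMonSol
  rw [← matE_map_castHom, ← map_pow]
  rcases hsol with hsol | hsol <;> rw [hsol]
  · exact .inl (map_one _)
  · exact .inr (by rw [map_neg, map_one])

lemma Matrix.exists_eq_smul_of_map_castHom_eq_zero {d N : ℕ} (h : d ∣ N) {ι κ : Type*}
    {C : Matrix ι κ (ZMod N)} (hC : C.map (ZMod.castHom h (ZMod d)) = 0) :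
    ∃ C' : Matrix ι κ (ZMod N), C = (d : ZMod N) • C' := by
  choose y hy using fun i j =>
    ZMod.exists_eq_mul_of_castHom_eq_zero h (congrFun (congrFun hC i) j)
  exact ⟨Matrix.of y, by ext i j; exact hy i j⟩

lemma isMonSol.mul_of_castHom {d N p : ℕ} (h : d ∣ N) (hdd : N ∣ d * d) (hpd : N ∣ p * d)
    {a : ZMod N} {r : ℕ} (hsol : isMonSol (ZMod.castHom h (ZMod d) a) r) :
    isMonSol a (p * r) := by
  set B := matE a ^ r
  have hB : (ZMod.castHom h (ZMod d)).mapMatrix B = matE (ZMod.castHom h (ZMod d) a) ^ r := by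
    rw [map_pow, matE_map_castHom]
  obtain ⟨E, hE, hBE⟩ : ∃ E, (E = 1 ∨ E = -1) ∧
      (ZMod.castHom h (ZMod d)).mapMatrix (B - E) = 0 := by
    rcases hsol with hsol | hsol
    · exact ⟨1, .inl rfl, by rw [map_sub, hB, hsol, map_one, sub_self]⟩
    · exact ⟨-1, .inr rfl, by rw [map_sub, hB, hsol, map_neg, map_one, sub_self]⟩
  obtain ⟨C, hC⟩ := Matrix.exists_eq_smul_of_map_castHom_eq_zero h hBE
  have hCC : (B - E) * (B - E) = 0 := by
    rw [hC, smul_mul_smul_comm, ← Nat.cast_mul, (ZMod.natCast_eq_zero_iff _ _).2 hdd, zero_smul]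
  have hpC : p • (B - E) = 0 := by
    rw [hC, ← Nat.cast_smul_eq_nsmul (ZMod N), smul_smul, ← Nat.cast_mul,
      (ZMod.natCast_eq_zero_iff _ _).2 hpd, zero_smul]
  have hEC : Commute E (B - E) := by
    rcases hE with rfl | rfl
    · exact Commute.one_left _
    · exact Commute.neg_one_left _
  have hBp : B ^ p = E ^ p := by
    rw [← add_sub_cancel E B, add_pow_eq_pow_of_mul_self_eq_zero hEC hCC hpC]
  unfold isMonSol
  rw [mul_comm, pow_mul, hBp]
  exact pow_eq_one_or_neg_one hE p

lemma Nat.eq_or_eq_mul_of_dvd_of_dvd_prime_mul {p r s : ℕ} (hp : p.Prime) (hr : 0 < r)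
    (hrs : r ∣ s) (hs : s ∣ p * r) : s = r ∨ s = p * r := by
  obtain ⟨t, rfl⟩ := hrs
  have ht : t ∣ p := Nat.dvd_of_mul_dvd_mul_left hr (by rwa [mul_comm p r] at hs)
  rcases (Nat.dvd_prime hp).1 ht with rfl | rfl
  · exact .inl (mul_one r)
  · exact .inr (mul_comm r t)

theorem stmt3 (p : ℕ) (hp : p.Prime) (k : ℤ) (n : ℕ) (hn : 1 ≤ n)
    (r r' : ℕ) (hr : minMonSize (k : ZMod (p ^ n)) r)
    (hr' : minMonSize (k : ZMod (p ^ (n + 1))) r') :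
    r' = r ∨ r' = p * r := by
  have hdvd : p ^ n ∣ p ^ (n + 1) := pow_dvd_pow p n.le_succ
  have hsq : p ^ (n + 1) ∣ p ^ n * p ^ n := by rw [← pow_add]; exact pow_dvd_pow p (by omega)
  have hp_mul : p ^ (n + 1) ∣ p * p ^ n := by rw [← pow_succ']
  have hdown : isMonSol (k : ZMod (p ^ n)) r' := by
    simpa only [map_intCast] using hr'.2.1.castHom hdvd
  have hup : isMonSol (k : ZMod (p ^ (n + 1))) (p * r) :=
    isMonSol.mul_of_castHom hdvd hsq hp_mul (by simpa only [map_intCast] using hr.2.1)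
  exact Nat.eq_or_eq_mul_of_dvd_of_dvd_prime_mul hp hr.1 (hr.dvd hdown)
    (hr'.dvd hup)
end

section
/- Let p be an odd prime, k an integer, and n ≥ 1. If the size r of the k̄-monomial minimal solution modulo p^n is even, then M_r(k̄,...,k̄) = -Id in SL₂(ℤ/p^nℤ). -/
/-!
Write `r = 2s`. Since `E = matE k` has determinant `1`, so does `A = E ^ s`, and `A * A = ±1`.
If `A * A = 1`, Cayley–Hamilton gives `tr A • A = 2`; as `2` is a unit modulo `p ^ n`, `A` is a
scalar `c` with `c * c = 1`. In the local ring `ℤ/p^nℤ` the factors of `(c - 1) * (c + 1) = 0`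
differ by the unit `2`, so `c = ±1`, i.e. `s` already gives a solution, contradicting minimality.
-/

theorem Matrix.mul_self_fin_two {R : Type*} [CommRing R] (A : Matrix (Fin 2) (Fin 2) R) :
    A * A = A.trace • A - A.det • 1 := by
  ext i j
  fin_cases i <;> fin_cases j <;>
    simp [Matrix.mul_apply, Matrix.trace_fin_two, Matrix.det_fin_two] <;> ring

theorem IsLocalRing.eq_one_or_eq_neg_one_of_mul_self_eq_one {R : Type*} [CommRing R]
    [IsLocalRing R] (h2 : IsUnit (2 : R)) {x : R} (hx : x * x = 1) : x = 1 ∨ x = -1 := by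
  have hprod : (x - 1) * (x + 1) = 0 := by linear_combination hx
  have hsum : (x + 1) + -(x - 1) = 2 := by ring
  rcases IsLocalRing.isUnit_or_isUnit_of_isUnit_add (hsum ▸ h2) with hu | hu
  · left
    linear_combination hu.mul_left_eq_zero.mp hprod
  · right
    linear_combination ((IsUnit.neg_iff _).mp hu).mul_right_eq_zero.mp hprod

theorem Matrix.fin_two_eq_one_or_eq_neg_one_of_mul_self_eq_one {R : Type*} [CommRing R]
    [IsLocalRing R] (h2 : IsUnit (2 : R)) {A : Matrix (Fin 2) (Fin 2) R} (hdet : A.det = 1)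
    (hA : A * A = 1) : A = 1 ∨ A = -1 := by
  have htr : A.trace • A = (2 : R) • 1 := by
    have := A.mul_self_fin_two
    rw [hA, hdet, one_smul] at this
    rw [two_smul]
    exact sub_eq_iff_eq_add.mp this.symm
  have ht : IsUnit A.trace := by
    have h00 : A.trace * A 0 0 = 2 := by simpa using congrFun (congrFun htr 0) 0
    exact isUnit_of_mul_isUnit_left (h00 ▸ h2)
  set c : R := ↑ht.unit⁻¹ * 2
  have hAc : A = c • 1 := by
    rw [mul_smul, ← htr, smul_smul, ht.val_inv_mul, one_smul]
  have hc : c * c = 1 := by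
    rw [← hdet, hAc, Matrix.det_smul, Matrix.det_one, Fintype.card_fin, mul_one, sq]
  rcases IsLocalRing.eq_one_or_eq_neg_one_of_mul_self_eq_one h2 hc with h | h
  · exact .inl (by rw [hAc, h, one_smul])
  · exact .inr (by rw [hAc, h, neg_one_smul])

theorem ZMod.isLocalRing_prime_pow {p : ℕ} [Fact p.Prime] {n : ℕ} (hn : n ≠ 0) :
    IsLocalRing (ZMod (p ^ n)) :=
  haveI : Nontrivial (ZMod (p ^ n)) :=
    ZMod.nontrivial_iff.mpr (Nat.one_lt_pow hn (Fact.out : p.Prime).one_lt).ne'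
  .of_surjective' (PadicInt.toZModPow n) (ZMod.ringHom_surjective _)

theorem ZMod.isUnit_two_of_odd {N : ℕ} (hN : Odd N) : IsUnit (2 : ZMod N) := by
  simpa using (ZMod.isUnit_iff_coprime 2 N).mpr (Nat.coprime_two_left.mpr hN)

theorem det_matE {N : ℕ} (a : ZMod N) : (matE a).det = 1 := by
  simp [matE, Matrix.det_fin_two_of]

theorem matE_pow_eq_neg_one_of_minMonSize {N : ℕ} [IsLocalRing (ZMod N)]
    (h2 : IsUnit (2 : ZMod N)) {k : ZMod N} {r : ℕ} (hr : minMonSize k r) (hre : Even r) :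
    matE k ^ r = -1 := by
  obtain ⟨hr0, hsol, hmin⟩ := hr
  refine hsol.resolve_left fun hone => ?_
  obtain ⟨s, rfl⟩ := hre
  have hdet : (matE k ^ s).det = 1 := by rw [Matrix.det_pow, det_matE, one_pow]
  have hsq : matE k ^ s * matE k ^ s = 1 := by rwa [← pow_add]
  have := hmin s (by omega) (Matrix.fin_two_eq_one_or_eq_neg_one_of_mul_self_eq_one h2 hdet hsq)
  omega

theorem stmt4 (p : ℕ) (hp : p.Prime) (hodd : Odd p) (k : ℤ) (n : ℕ) (hn : 1 ≤ n)
    (r : ℕ) (hr : minMonSize (k : ZMod (p ^ n)) r) (hre : Even r) :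
    matE (k : ZMod (p ^ n)) ^ r = -1 := by
  have : Fact p.Prime := ⟨hp⟩
  have := ZMod.isLocalRing_prime_pow (p := p) (n := n) (by omega)
  exact matE_pow_eq_neg_one_of_minMonSize (ZMod.isUnit_two_of_odd hodd.pow) hr hre
end

section
/- Let N ≥ 2 not be of the form 2u with u odd (i.e., N is odd, or 4 divides N). Then the size of any k̄-monomial minimal solution modulo N is at most 2N. -/
/-! Since `E = matE k` satisfies `E ^ 2 = κ E - 1` for an integer `κ` lifting `k`, we work with a
root `x` of `X ^ 2 - κ X + 1` in a commutative ring and show `n ∣ x ^ (2 * c) - 1` for some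
`0 < c ≤ n` whenever `2 ∣ n → 4 ∣ n`.

Modulo an odd prime `p`, `T = 2 x - κ` has `T ^ 2 = κ ^ 2 - 4`, so Frobenius gives
`2 x ^ p = κ + (κ ^ 2 - 4) ^ ((p - 1) / 2) T`, and by Euler's criterion the coefficient of `T` is
`1`, `-1` or `0`: then `x ^ p = x`, `x ^ p = x⁻¹` or `(2 x ^ p) ^ 2 = 4`, i.e. `x ^ (p - 1) = 1`,
`x ^ (p + 1) = 1` or `x ^ (2 p) = 1`. Modulo `2`, `x ^ 2 ≡ 1` or `x ^ 3 ≡ 1` according to the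
parity of `κ`. A congruence modulo `p` lifts to `p ^ e` on raising `x` to the power `p ^ (e - 1)`
(for `p = 2` the exponent `3 * 2 ^ (e - 1)` is even only when `e ≥ 2`), and the Chinese remainder
theorem glues the prime powers. -/

theorem Nat.four_dvd_of_coprime {a b : ℕ} (hab : a.Coprime b) (h : 2 ∣ a * b → 4 ∣ a * b)
    (ha : 2 ∣ a) : 4 ∣ a :=
  (Nat.Coprime.pow_left 2 (hab.coprime_dvd_left ha)).dvd_of_dvd_mul_right
    (h (dvd_mul_of_dvd_left ha b))

section RootsOfQuadratic

variable {A : Type*} [CommRing A] {κ : ℤ} {x : A}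

theorem two_mul_pow_eq_of_charP {p : ℕ} [Fact p.Prime] [CharP A p] (hp2 : p ≠ 2)
    (hx : x ^ 2 = κ * x - 1) :
    2 * x ^ p = κ + ZMod.castHom dvd_rfl A (((κ : ZMod p) ^ 2 - 4) ^ (p / 2)) * (2 * x - κ) := by
  set ι : ZMod p →+* A := ZMod.castHom dvd_rfl A
  have hp_odd : p = 2 * (p / 2) + 1 := by
    have := (Fact.out : p.Prime).eq_two_or_odd.resolve_left hp2
    omega
  have hfix (a : ZMod p) : ι a ^ p = ι a := by rw [← map_pow, ZMod.pow_card]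
  have hT : (2 * x - κ) ^ 2 = ι ((κ : ZMod p) ^ 2 - 4) := by
    simp only [map_sub, map_pow, map_intCast, map_ofNat]
    linear_combination 4 * hx
  calc 2 * x ^ p = (κ + (2 * x - κ)) ^ p := by
        rw [add_sub_cancel, mul_pow, ← map_ofNat ι 2, hfix]
    _ = κ + (2 * x - κ) * ((2 * x - κ) ^ 2) ^ (p / 2) := by
        rw [add_pow_char, ← map_intCast ι, hfix, ← pow_mul, ← pow_succ', ← hp_odd]
    _ = κ + ι (((κ : ZMod p) ^ 2 - 4) ^ (p / 2)) * (2 * x - κ) := by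
        rw [hT, ← map_pow, mul_comm]

theorem exists_pow_two_mul_eq_one_of_charP {p : ℕ} [hp : Fact p.Prime] [CharP A p] (hp2 : p ≠ 2)
    (hx : x ^ 2 = κ * x - 1) : ∃ c, 0 < c ∧ c ≤ p ∧ x ^ (2 * c) = 1 := by
  have hp3 : 3 ≤ p := hp.out.two_le.lt_of_ne' hp2
  have hp_odd : p % 2 = 1 := hp.out.eq_two_or_odd.resolve_left hp2
  have hunit : IsUnit (2 : A) := (CharP.isUnit_ofNat_iff hp.out).2
    fun h => hp2 ((Nat.prime_dvd_prime_iff_eq hp.out Nat.prime_two).1 h)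
  have hfrob := two_mul_pow_eq_of_charP hp2 hx
  have hinv : x * (κ - x) = 1 := by linear_combination -hx
  by_cases hD : (κ : ZMod p) ^ 2 - 4 = 0
  · refine ⟨p, by omega, le_rfl, hunit.mul_left_cancel (hunit.mul_left_cancel ?_)⟩
    have hpow : 2 * x ^ p = κ := by
      rw [hfrob, hD, zero_pow (by omega), map_zero, zero_mul, add_zero]
    have hκ : (κ : A) ^ 2 = 4 := by
      have := congrArg (ZMod.castHom dvd_rfl A) hD
      rwa [map_sub, map_pow, map_intCast, map_ofNat, map_zero, sub_eq_zero] at this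
    linear_combination (2 * x ^ p + κ) * hpow + hκ
  rcases ZMod.pow_div_two_eq_neg_one_or_one p hD with hs | hs
  · refine ⟨p / 2, by omega, by omega, ?_⟩
    have hpow : x ^ p = x := hunit.mul_left_cancel (by rw [hfrob, hs, map_one]; ring)
    calc x ^ (2 * (p / 2)) = x ^ (2 * (p / 2) + 1) * (κ - x) := by
          rw [pow_succ, mul_assoc, hinv, mul_one]
      _ = 1 := by rw [show 2 * (p / 2) + 1 = p by omega, hpow, hinv]
  · refine ⟨p / 2 + 1, by omega, by omega, ?_⟩
    have hpow : x ^ p = κ - x := hunit.mul_left_cancel (by rw [hfrob, hs, map_neg, map_one]; ring)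
    rw [show 2 * (p / 2 + 1) = p + 1 by omega, pow_succ, hpow, mul_comm, hinv]

theorem exists_natCast_dvd_pow_two_mul_sub_one_of_prime {p : ℕ} (hp : p.Prime) (hp2 : p ≠ 2)
    (hx : x ^ 2 = κ * x - 1) : ∃ c, 0 < c ∧ c ≤ p ∧ (p : A) ∣ x ^ (2 * c) - 1 := by
  have : Fact p.Prime := ⟨hp⟩
  let f := Ideal.Quotient.mk (Ideal.span {(p : A)})
  have hdvd (a : A) : (p : A) ∣ a ↔ f a = 0 := by
    rw [Ideal.Quotient.eq_zero_iff_mem, Ideal.mem_span_singleton]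
  rcases subsingleton_or_nontrivial (A ⧸ Ideal.span {(p : A)}) with _ | _
  · exact ⟨1, one_pos, hp.one_lt.le, (hdvd _).2 (Subsingleton.elim _ _)⟩
  have : CharP (A ⧸ Ideal.span {(p : A)}) p :=
    (CharP.charP_iff_prime_eq_zero hp).2 (by rw [← map_natCast f, ← hdvd])
  obtain ⟨c, hc0, hcp, hc⟩ :=
    exists_pow_two_mul_eq_one_of_charP hp2 (x := f x) (by simpa using congrArg f hx)
  exact ⟨c, hc0, hcp, (hdvd _).2 (by rw [map_sub, map_pow, hc, map_one, sub_self])⟩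

theorem two_dvd_pow_two_sub_one_or_pow_three_sub_one (hx : x ^ 2 = κ * x - 1) :
    (2 : A) ∣ x ^ 2 - 1 ∨ (2 : A) ∣ x ^ 3 - 1 := by
  rcases Int.even_or_odd' κ with ⟨a, rfl | rfl⟩
  · exact Or.inl ⟨a * x - 1, by push_cast at hx; linear_combination hx⟩
  · refine Or.inr ⟨(a + 1) * (2 * a * x - 1), ?_⟩
    push_cast at hx
    linear_combination (x + 2 * a + 1) * hx

theorem natCast_pow_succ_dvd_pow_mul_sub_one {p m : ℕ} (h : (p : A) ∣ x ^ m - 1) (k : ℕ) :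
    ((p ^ (k + 1) : ℕ) : A) ∣ x ^ (m * p ^ k) - 1 := by
  simpa [pow_mul] using dvd_sub_pow_of_dvd_sub h k

theorem exists_natCast_dvd_pow_two_mul_sub_one_of_prime_pow {p e : ℕ} (hp : p.Prime) (he : 0 < e)
    (h2 : p = 2 → 2 ≤ e) (hx : x ^ 2 = κ * x - 1) :
    ∃ c, 0 < c ∧ c ≤ p ^ e ∧ ((p ^ e : ℕ) : A) ∣ x ^ (2 * c) - 1 := by
  obtain ⟨e, rfl⟩ : ∃ k, e = k + 1 := ⟨e - 1, by omega⟩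
  by_cases hp2 : p = 2
  · subst hp2
    obtain ⟨e, rfl⟩ : ∃ k, e = k + 1 := ⟨e - 1, by omega⟩
    rcases two_dvd_pow_two_sub_one_or_pow_three_sub_one hx with h | h
    · refine ⟨2 * 2 ^ e, by positivity, by rw [pow_succ, pow_succ]; omega, ?_⟩
      convert natCast_pow_succ_dvd_pow_mul_sub_one h (e + 1) using 3
      ring
    · refine ⟨3 * 2 ^ e, by positivity, by rw [pow_succ, pow_succ]; omega, ?_⟩
      convert natCast_pow_succ_dvd_pow_mul_sub_one h (e + 1) using 3
      ring
  · obtain ⟨c, hc0, hcp, hc⟩ := exists_natCast_dvd_pow_two_mul_sub_one_of_prime hp hp2 hx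
    refine ⟨c * p ^ e, Nat.mul_pos hc0 (pow_pos hp.pos e),
      by rw [pow_succ']; exact Nat.mul_le_mul_right _ hcp, ?_⟩
    rw [← mul_assoc]
    exact natCast_pow_succ_dvd_pow_mul_sub_one hc e

theorem exists_natCast_dvd_pow_two_mul_sub_one (hx : x ^ 2 = κ * x - 1) {n : ℕ} (hn : 0 < n)
    (h2n : 2 ∣ n → 4 ∣ n) : ∃ c, 0 < c ∧ c ≤ n ∧ (n : A) ∣ x ^ (2 * c) - 1 := by
  induction n using Nat.recOnPosPrimePosCoprime with
  | zero => omega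
  | one => exact ⟨1, one_pos, le_rfl, by rw [Nat.cast_one]; exact one_dvd _⟩
  | prime_pow p e hp he =>
    refine exists_natCast_dvd_pow_two_mul_sub_one_of_prime_pow hp he (fun hp2 => ?_) hx
    subst hp2
    exact (Nat.pow_dvd_pow_iff_le_right one_lt_two).1 (h2n (dvd_pow_self 2 he.ne'))
  | coprime a b ha hb hab iha ihb =>
    obtain ⟨ca, hca0, hca, hxa⟩ := iha (by omega) (Nat.four_dvd_of_coprime hab h2n)
    obtain ⟨cb, hcb0, hcb, hxb⟩ := ihb (by omega)
      (Nat.four_dvd_of_coprime hab.symm (by rwa [mul_comm b a]))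
    refine ⟨ca * cb, Nat.mul_pos hca0 hcb0, Nat.mul_le_mul hca hcb, ?_⟩
    rw [Nat.cast_mul]
    refine hab.cast.mul_dvd ?_ ?_
    · rw [← mul_assoc]
      exact hxa.trans (pow_one_sub_dvd_pow_mul_sub_one x _ _)
    · rw [mul_comm ca cb, ← mul_assoc]
      exact hxb.trans (pow_one_sub_dvd_pow_mul_sub_one x _ _)

end RootsOfQuadratic

theorem matE_intCast_sq {N : ℕ} (κ : ℤ) :
    matE (κ : ZMod N) ^ 2 = (κ : Matrix (Fin 2) (Fin 2) (ZMod N)) * matE κ - 1 := by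
  ext i j
  fin_cases i <;> fin_cases j <;>
    simp [matE, sq, Matrix.mul_apply, Fin.sum_univ_two, Matrix.intCast_apply, sub_eq_add_neg]

open scoped IsMulCommutative in
theorem exists_matE_pow_two_mul_eq_one {N : ℕ} (hN : 0 < N) (h2N : 2 ∣ N → 4 ∣ N)
    (k : ZMod N) : ∃ c, 0 < c ∧ c ≤ N ∧ matE k ^ (2 * c) = 1 := by
  obtain ⟨κ, rfl⟩ : ∃ κ : ℤ, (κ : ZMod N) = k := ⟨k.cast, ZMod.intCast_zmod_cast k⟩
  let S := Subring.closure {matE (κ : ZMod N)}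
  have : IsMulCommutative S := Subring.isMulCommutative_closure (by simp)
  let y : S := ⟨matE κ, Subring.subset_closure rfl⟩
  have hy : y ^ 2 = κ * y - 1 := Subtype.ext (by simpa using matE_intCast_sq κ)
  obtain ⟨c, hc0, hcN, hc⟩ := exists_natCast_dvd_pow_two_mul_sub_one hy hN h2N
  have hN0 : (N : S) = 0 := Subtype.ext (by simp)
  rw [hN0, zero_dvd_iff, sub_eq_zero] at hc
  exact ⟨c, hc0, hcN, congrArg Subtype.val hc⟩

theorem stmt9 (N : ℕ) (hN : 2 ≤ N) (hform : ¬ ∃ u, Odd u ∧ N = 2 * u)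
    (k : ZMod N) (l : ℕ) (hl : minMonSize k l) :
    l ≤ 2 * N := by
  have h2N : 2 ∣ N → 4 ∣ N := by
    rintro ⟨u, rfl⟩
    rcases Nat.even_or_odd u with ⟨v, rfl⟩ | hu
    · exact ⟨v, by ring⟩
    · exact absurd ⟨u, hu, rfl⟩ hform
  obtain ⟨c, hc0, hcN, hc⟩ := exists_matE_pow_two_mul_eq_one (by omega) h2N k
  have := hl.2.2 (2 * c) (by omega) (Or.inl hc)
  omega
end

section
/- Let N = p₁^{α₁}···p_r^{α_r} with r ≥ 1, with p_i pairwise distinct primes and α_i ≥ 1, and let k = a·p₁^{β₁}···p_r^{β_r} with 1 ≤ β_i ≤ α_i for all i and a an integer divisible by none of the p_i. Then the size of the k̄-monomial minimal solution modulo N equals 2·p₁^{α₁-β₁}···p_r^{α_r-β_r}. -/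
/-!
Write `E = matE k`. Since `E² = kE - 1`, we have `E^(2j) = (-1)^j (1 - kE)^j`, and modulo any `pᵢ`
the matrix `E` becomes a quarter turn, so no odd power of `E` is `±1`.

Because `pᵢ^βᵢ ∣ k`, the matrix `1 - kE` is `≡ 1` modulo `pᵢ^βᵢ`, and each `pᵢ`-th power gains
one more factor `pᵢ`; hence `(1 - kE)^d = 1` modulo `N` and `E^(2d) = (-1)^d`.
Conversely, if `pᵢ^w` exactly divides `j`, the binomial expansion shows that the `(1,0)` entry of
`(1 - kE)^j` is `-jk` modulo `pᵢ^(w + βᵢ + 1)`, which is not zero; so `E^(2j) = ±1` forces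
`pᵢ^(αᵢ - βᵢ) ∣ j` for every `i`, that is `d ∣ j`.
-/

open Polynomial

theorem natCast_pow_add_dvd_pow_pow_sub_one {R : Type*} [CommRing R] {p m : ℕ} {x : R}
    (hm : 1 ≤ m) (h : (p : R) ^ m ∣ x - 1) (γ : ℕ) :
    (p : R) ^ (m + γ) ∣ x ^ p ^ γ - 1 := by
  induction γ with
  | zero => simpa using h
  | succ γ ih =>
    have hsum : (p : R) ∣ ∑ i ∈ Finset.range p, (x ^ p ^ γ) ^ i * 1 ^ (p - 1 - i) :=
      dvd_geom_sum₂_self ((dvd_pow_self _ (by omega)).trans ih)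
    have hfactor : x ^ p ^ (γ + 1) - 1
        = (x ^ p ^ γ - 1) * ∑ i ∈ Finset.range p, (x ^ p ^ γ) ^ i * 1 ^ (p - 1 - i) := by
      rw [mul_comm, geom_sum₂_mul, one_pow, pow_succ, pow_mul]
    rw [hfactor, ← add_assoc, pow_succ]
    exact mul_dvd_mul ih hsum

theorem one_add_pow_eq_of_choose_smul_pow_eq_zero {R : Type*} [Ring R] {y : R} {j : ℕ}
    (h : ∀ t, 3 ≤ t → j.choose t • y ^ t = 0) :
    (1 + y) ^ j = 1 + j • y + j.choose 2 • y ^ 2 := by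
  have hsum : ∑ t ∈ Finset.range (j + 1), j.choose t • y ^ t
      = ∑ t ∈ Finset.range (3 + j), j.choose t • y ^ t :=
    Finset.sum_subset (Finset.range_subset_range.mpr (by omega)) fun t _ ht => by
      rw [Nat.choose_eq_zero_of_lt (by simpa using ht), zero_smul]
  rw [add_comm, (Commute.one_right y).add_pow]
  simp only [one_pow, mul_one, ← nsmul_eq_mul']
  rw [hsum, Finset.sum_range_add, Finset.sum_eq_zero fun t _ => h (3 + t) (by omega)]
  simp [Finset.sum_range_succ]

section MatE

variable {N : ℕ}

theorem matE_sq (a : ZMod N) : matE a ^ 2 = a • matE a - 1 := by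
  ext i j
  fin_cases i <;> fin_cases j <;> simp [matE, sq, sub_eq_add_neg]

theorem matE_pow_two_mul (a : ZMod N) (j : ℕ) :
    matE a ^ (2 * j) = (-1 : ZMod N) ^ j • (1 - a • matE a) ^ j := by
  rw [pow_mul, matE_sq, ← _root_.smul_pow, neg_one_smul, neg_sub]

theorem isMonSol.apply_one_zero {a : ZMod N} {m : ℕ} (h : isMonSol a m) :
    (matE a ^ m) 1 0 = 0 := by
  rcases h with h | h <;> simp [h]

theorem isMonSol.of_dvd {q m : ℕ} {k : ℤ} (h : isMonSol (k : ZMod N) m) (hq : q ∣ N) :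
    isMonSol (k : ZMod q) m := by
  have hmap :
      (ZMod.castHom hq (ZMod q)).mapMatrix (matE (k : ZMod N)) = matE (k : ZMod q) := by
    ext i j
    fin_cases i <;> fin_cases j <;> simp [matE, ZMod.cast_one hq, ZMod.cast_neg hq]
  rcases h with h | h
  · left
    rw [← hmap, ← map_pow, h, map_one]
  · right
    rw [← hmap, ← map_pow, h, map_neg, map_one]

theorem isMonSol_two_mul_of_dvd {d : ℕ} {k : ℤ} (h : (N : ℤ[X]) ∣ (1 - C k * X) ^ d - 1) :
    isMonSol (k : ZMod N) (2 * d) := by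
  obtain ⟨g, hg⟩ := h
  have hpow : (1 - (k : ZMod N) • matE (k : ZMod N)) ^ d = 1 := by
    have := congrArg (aeval (matE (k : ZMod N))) hg
    simp only [map_sub, map_pow, map_one, map_mul, aeval_X, map_natCast, map_intCast,
      eq_intCast, CharP.cast_eq_zero, zero_mul, sub_eq_zero] at this
    rwa [Int.cast_smul_eq_zsmul, zsmul_eq_mul]
  rw [isMonSol, matE_pow_two_mul, hpow]
  rcases neg_one_pow_eq_or (ZMod N) d with h | h <;> simp [h]

theorem not_isMonSol_two_mul_add_one {p : ℕ} (hp : p.Prime) (hpN : p ∣ N) {k : ℤ}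
    (hk : (p : ℤ) ∣ k) (j : ℕ) : ¬ isMonSol (k : ZMod N) (2 * j + 1) := by
  have := Fact.mk hp
  intro h
  have h10 := (h.of_dvd hpN).apply_one_zero
  rw [(ZMod.intCast_zmod_eq_zero_iff_dvd k p).mpr hk, pow_succ, matE_pow_two_mul] at h10
  simp [matE] at h10

theorem dvd_of_isMonSol_two_mul {j : ℕ} {k : ℤ} (h : isMonSol (k : ZMod N) (2 * j))
    (hterm : ∀ t, 3 ≤ t → (N : ℤ) ∣ j.choose t * k ^ t) :
    (N : ℤ) ∣ j * k - j.choose 2 * k ^ 3 := by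
  have hvanish : ∀ t, 3 ≤ t → j.choose t • (-((k : ZMod N) • matE (k : ZMod N))) ^ t = 0 := by
    intro t ht
    have hcoeff : ((j.choose t * (-k) ^ t : ℤ) : ZMod N) = 0 := by
      rw [ZMod.intCast_zmod_eq_zero_iff_dvd, neg_pow, mul_left_comm]
      exact (hterm t ht).mul_left _
    push_cast at hcoeff
    rw [← neg_smul, _root_.smul_pow, ← Nat.cast_smul_eq_nsmul (ZMod N), smul_smul, hcoeff,
      zero_smul]
  -- the cubic term is `C(j,2) k² (E²)₁₀` with `(E²)₁₀ = k`
  have h10 := h.apply_one_zero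
  rw [matE_pow_two_mul, sub_eq_add_neg, one_add_pow_eq_of_choose_smul_pow_eq_zero hvanish,
    Matrix.smul_apply, smul_eq_mul, neg_one_pow_mul_eq_zero_iff] at h10
  rw [← ZMod.intCast_zmod_eq_zero_iff_dvd, ← neg_eq_zero, ← h10]
  simp [matE, sq]
  ring

end MatE

section Valuation

variable {p : ℕ}

theorem factorization_add_two_le (hp : p.Prime) {t : ℕ} (ht : 3 ≤ t) :
    t.factorization p + 2 ≤ t := by
  set u := t.factorization p
  have hpow : 2 ^ u ≤ t :=
    (Nat.pow_le_pow_left hp.two_le u).trans (Nat.ordProj_le p (by omega))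
  have hdouble : 2 * u ≤ 2 ^ u := by
    rcases Nat.eq_zero_or_pos u with hu | hu
    · simp [hu]
    · have := @Nat.lt_two_pow_self (u - 1)
      rw [show u = u - 1 + 1 by omega, pow_succ]
      omega
  omega

theorem pow_dvd_choose_mul_pow (hp : p.Prime) {v β j t s : ℕ} {k : ℤ} (hj : p ^ v ∣ j)
    (hk : (p : ℤ) ^ β ∣ k) (hβ : 1 ≤ β) (ht : t ≠ 0) (hs : t.factorization p + 2 ≤ s) :
    (p : ℤ) ^ (v + β + 1) ∣ j.choose t * k ^ s := by
  set u := t.factorization p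
  have hchoose : p ^ v ∣ j.choose t * t := by
    rcases j with _ | n
    · simp [Nat.choose_eq_zero_of_lt (Nat.pos_of_ne_zero ht)]
    · obtain ⟨t', rfl⟩ := Nat.exists_eq_succ_of_ne_zero ht
      rw [← Nat.add_one_mul_choose_eq]
      exact hj.mul_right _
  have hchoose' : p ^ v ∣ j.choose t * p ^ u := by
    have hsplit : p ^ v ∣ j.choose t * p ^ u * (t / p ^ u) := by
      rwa [mul_assoc, Nat.ordProj_mul_ordCompl_eq_self]
    exact ((Nat.coprime_ordCompl hp ht).pow_left v).dvd_of_dvd_mul_right hsplit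
  have hexp : u + β + 1 ≤ s * β := by nlinarith
  calc (p : ℤ) ^ (v + β + 1) ∣ (j.choose t * p ^ u : ℕ) * (p : ℤ) ^ (β + 1) := by
        rw [add_assoc, pow_add]
        exact mul_dvd_mul_right (by exact_mod_cast hchoose') _
    _ = j.choose t * (p : ℤ) ^ (u + β + 1) := by push_cast; ring
    _ ∣ j.choose t * (p : ℤ) ^ (s * β) := mul_dvd_mul_left _ (pow_dvd_pow _ hexp)
    _ ∣ j.choose t * k ^ s := by
        rw [mul_comm s, pow_mul]
        exact mul_dvd_mul_left _ (pow_dvd_pow_of_dvd hk s)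

end Valuation

theorem pow_sub_dvd_of_isMonSol_two_mul {p β e j : ℕ} {k k' : ℤ} (hp : p.Prime)
    (hβ : 1 ≤ β) (hk : k = p ^ β * k') (hk' : ¬ (p : ℤ) ∣ k') (hj : j ≠ 0)
    (h : isMonSol (k : ZMod (p ^ e)) (2 * j)) : p ^ (e - β) ∣ j := by
  set v := j.factorization p
  have hv : p ^ v ∣ j := Nat.ordProj_dvd j p
  have hkβ : (p : ℤ) ^ β ∣ k := ⟨k', hk⟩
  by_contra hndvd
  have hve : v + β + 1 ≤ e := by
    by_contra hlt
    exact hndvd ((pow_dvd_pow p (by omega)).trans hv)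
  have hcubic := dvd_of_isMonSol_two_mul (h.of_dvd (pow_dvd_pow p hve)) fun t ht => by
    exact_mod_cast
      pow_dvd_choose_mul_pow hp hv hkβ hβ (by omega) (factorization_add_two_le hp ht)
  have hquad : (p : ℤ) ^ (v + β + 1) ∣ j.choose 2 * k ^ 3 :=
    pow_dvd_choose_mul_pow hp hv hkβ hβ two_ne_zero
      (by have := Nat.factorization_lt p two_ne_zero; omega)
  have hjk : (p : ℤ) ^ β * (p : ℤ) ^ (v + 1) ∣ (p : ℤ) ^ β * (j * k') := by
    rw [← pow_add, show β + (v + 1) = v + β + 1 by ring, mul_left_comm, ← hk]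
    push_cast at hcubic
    simpa using hcubic.add hquad
  have hjk' := (mul_dvd_mul_iff_left (pow_ne_zero β (by exact_mod_cast hp.ne_zero))).mp hjk
  have hcop : IsCoprime ((p : ℤ) ^ (v + 1)) k' :=
    ((Prime.coprime_iff_not_dvd (Nat.prime_iff_prime_int.mp hp)).mpr hk').pow_left
  exact Nat.pow_succ_factorization_not_dvd hj hp
    (by exact_mod_cast hcop.dvd_of_dvd_mul_right hjk')

theorem natCast_pow_dvd_one_sub_pow_sub_one {p β α d : ℕ} {k : ℤ} (hβ : 1 ≤ β)
    (hβα : β ≤ α) (hk : (p : ℤ) ^ β ∣ k) (hd : p ^ (α - β) ∣ d) :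
    ((p ^ α : ℕ) : ℤ[X]) ∣ (1 - C k * X) ^ d - 1 := by
  obtain ⟨c, rfl⟩ := hd
  have hstep : (p : ℤ[X]) ^ β ∣ (1 - C k * X) - 1 := by
    rw [sub_sub_cancel_left, dvd_neg, ← map_natCast C, ← map_pow]
    exact (map_dvd C hk).mul_right X
  have := natCast_pow_add_dvd_pow_pow_sub_one hβ hstep (α - β)
  rw [Nat.add_sub_cancel' hβα] at this
  push_cast
  exact this.trans (pow_one_sub_dvd_pow_mul_sub_one _ _ _)

section PrimePowers

variable {ι : Type*} [Fintype ι] {p : ι → ℕ}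

theorem natCast_prod_pow_dvd {R : Type*} [CommRing R] (hp : ∀ i, (p i).Prime)
    (hinj : Function.Injective p) {e : ι → ℕ} {x : R} (h : ∀ i, ((p i ^ e i : ℕ) : R) ∣ x) :
    ((∏ i, p i ^ e i : ℕ) : R) ∣ x := by
  rw [Nat.cast_prod]
  refine Finset.prod_dvd_of_coprime (fun i _ l _ hil => ?_) fun i _ => h i
  have hcop := (Nat.coprime_pow_primes (e i) (e l) (hp i) (hp l) (hinj.ne hil)).isCoprime
  simpa using hcop.map (Int.castRingHom R)

theorem exists_eq_pow_mul_not_dvd (hp : ∀ i, (p i).Prime) (hinj : Function.Injective p)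
    {a : ℤ} (ha : ∀ i, ¬ (p i : ℤ) ∣ a) (β : ι → ℕ) (i : ι) :
    ∃ k', a * ∏ l, (p l : ℤ) ^ β l = p i ^ β i * k' ∧ ¬ (p i : ℤ) ∣ k' := by
  classical
  have hpi : Prime (p i : ℤ) := Nat.prime_iff_prime_int.mp (hp i)
  refine ⟨a * ∏ l ∈ Finset.univ.erase i, (p l : ℤ) ^ β l, ?_, ?_⟩
  · rw [← Finset.mul_prod_erase _ _ (Finset.mem_univ i)]
    ring
  · rw [hpi.dvd_mul, hpi.dvd_finsetProd_iff]
    rintro (hdvd | ⟨l, hl, hdvd⟩)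
    · exact ha i hdvd
    · have := (Nat.prime_dvd_prime_iff_eq (hp i) (hp l)).mp
        (Int.natCast_dvd_natCast.mp (hpi.dvd_of_dvd_pow hdvd))
      exact (Finset.mem_erase.mp hl).1 (hinj this).symm

end PrimePowers

theorem stmt11 (r : ℕ) (hr : 1 ≤ r) (p α β : Fin r → ℕ)
    (hp : ∀ i, (p i).Prime) (hdist : ∀ i j, i ≠ j → p i ≠ p j)
    (hβ : ∀ i, 1 ≤ β i) (hβα : ∀ i, β i ≤ α i)
    (N : ℕ) (hN : N = ∏ i, p i ^ α i)
    (a : ℤ) (ha : ∀ i, ¬ (p i : ℤ) ∣ a)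
    (k : ℤ) (hk : k = a * ∏ i, (p i : ℤ) ^ β i) :
    minMonSize (k : ZMod N) (2 * ∏ i, p i ^ (α i - β i)) := by
  set d := ∏ i, p i ^ (α i - β i)
  have hinj : Function.Injective p := fun i l h => by_contra fun hne => hdist i l hne h
  have hfac := exists_eq_pow_mul_not_dvd hp hinj ha β
  rw [← hk] at hfac
  have hkdvd : ∀ i, (p i : ℤ) ^ β i ∣ k := fun i => (hfac i).elim fun k' h => ⟨k', h.1⟩
  have hpowN : ∀ i, p i ^ α i ∣ N := fun i => hN ▸ Finset.dvd_prod_of_mem _ (Finset.mem_univ i)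
  have hdpos : 0 < d := Finset.prod_pos fun i _ => pow_pos (hp i).pos _
  refine ⟨by omega, ?_, fun m hm hsol => ?_⟩
  · refine isMonSol_two_mul_of_dvd (hN ▸ natCast_prod_pow_dvd hp hinj fun i => ?_)
    exact natCast_pow_dvd_one_sub_pow_sub_one (hβ i) (hβα i) (hkdvd i)
      (Finset.dvd_prod_of_mem _ (Finset.mem_univ i))
  obtain ⟨j, rfl | rfl⟩ := Nat.even_or_odd' m
  · have hdj : d ∣ j := Int.natCast_dvd_natCast.mp <| natCast_prod_pow_dvd hp hinj fun i => by
      obtain ⟨k', hk', hndvd⟩ := hfac i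
      exact Int.natCast_dvd_natCast.mpr <| pow_sub_dvd_of_isMonSol_two_mul (hp i) (hβ i) hk'
        hndvd (by omega) (hsol.of_dvd (hpowN i))
    exact Nat.mul_le_mul_left 2 (Nat.le_of_dvd (by omega) hdj)
  · let i₀ : Fin r := ⟨0, hr⟩
    have hpN : p i₀ ∣ N :=
      (dvd_pow_self _ (Nat.one_le_iff_ne_zero.mp ((hβ i₀).trans (hβα i₀)))).trans (hpowN i₀)
    have hpk : (p i₀ : ℤ) ∣ k :=
      (dvd_pow_self _ (Nat.one_le_iff_ne_zero.mp (hβ i₀))).trans (hkdvd i₀)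
    exact absurd hsol (not_isMonSol_two_mul_add_one (hp i₀) hpN hpk j)
end

section
/- Let N ≥ 2, k̄ ∈ ℤ/Nℤ, and let n be the size of the k̄-monomial minimal solution modulo N. For any m ≥ 1: (i) if (ā,k̄,...,k̄,b̄) ∈ (ℤ/Nℤ)^{nm} satisfies M_{nm}(ā,k̄,...,k̄,b̄) = ±Id, then ā = b̄ = k̄; (ii) there is no (ā,k̄,...,k̄,b̄) of length nm+1 with M_{nm+1}(ā,k̄,...,k̄,b̄) = ±Id; (iii) if (ā,k̄,...,k̄,b̄) ∈ (ℤ/Nℤ)^{nm+2} satisfies M_{nm+2}(ā,k̄,...,k̄,b̄) = ±Id, then ā = b̄ = 0̄. -/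
/-- `M_n(a₁,…,aₙ)` for a tuple given as a list. -/
def Mlist {N : ℕ} (l : List (ZMod N)) : Matrix (Fin 2) (Fin 2) (ZMod N) :=
  (l.map matE).reverse.prod

/-- A tuple is a solution of `(E_N)` if its matrix equals `±Id`. -/
def IsSolL {N : ℕ} (l : List (ZMod N)) : Prop := Mlist l = 1 ∨ Mlist l = -1

/-- The sum `⊕` of two tuples. -/
def oplus {N : ℕ} (a b : List (ZMod N)) : List (ZMod N) :=
  (a.head?.getD 0 + b.getLast?.getD 0) ::
    (a.tail.dropLast ++ ((a.getLast?.getD 0 + b.head?.getD 0) :: b.tail.dropLast))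

/-- Equivalence: cyclic permutation of the tuple or of its reversal. -/
def EquivL {N : ℕ} (a b : List (ZMod N)) : Prop :=
  (∃ i, b = a.rotate i) ∨ (∃ i, b = a.reverse.rotate i)

/-- A solution is reducible if it is equivalent to a sum `a ⊕ b` with `b` a
solution of `(E_N)` and both sizes at least 3. -/
def Reducible {N : ℕ} (c : List (ZMod N)) : Prop :=
  ∃ a b : List (ZMod N), 3 ≤ a.length ∧ 3 ≤ b.length ∧ IsSolL b ∧ EquivL c (oplus a b)

/-! Since `±1` is central and `M(a, k, …, k, b) = matE b * matE k ^ i * matE a`, a solution with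
`i` middle entries gives `matE k ^ i * (matE a * matE b) = ±1`. As `matE k` is invertible and
`matE k ^ (n * m) = ±1`, this forces `matE a * matE b = ±matE k ^ r`, where `i + r = n * m`.
For `r = 2, 1, 0` compare with `matE k * matE k`, with `matE k` (whose `(1,1)` entry is `0`, not
`-1`) and with `±1 = ∓(matE 0 * matE 0)`. -/

variable {N : ℕ}

lemma Mlist_cons_replicate_append (a b k : ZMod N) (j : ℕ) :
    Mlist (a :: (List.replicate j k ++ [b])) = matE b * matE k ^ j * matE a := by
  simp [Mlist, List.reverse_append, List.map_replicate, mul_assoc]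

lemma isUnit_matE (a : ZMod N) : IsUnit (matE a) := by
  simp [Matrix.isUnit_iff_isUnit_det, matE, Matrix.det_fin_two]

lemma matE_zero_mul_matE_zero : matE (0 : ZMod N) * matE 0 = -1 := by
  ext i j; fin_cases i <;> fin_cases j <;> simp [matE]

lemma mul_comm_of_mul_eq_one_or_neg_one {M : Type*} [Monoid M] [HasDistribNeg M]
    [IsDedekindFiniteMonoid M] {X Y : M} (h : X * Y = 1 ∨ X * Y = -1) :
    Y * X = 1 ∨ Y * X = -1 := by
  rcases h with h | h
  · exact .inl (mul_eq_one_comm.mp h)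
  · rw [← neg_eq_iff_eq_neg, ← mul_neg, mul_eq_one_comm, neg_mul, neg_eq_iff_eq_neg] at h
    exact .inr h

lemma eq_or_eq_neg_of_mul_eq_one_or_neg_one {M : Type*} [Monoid M] [HasDistribNeg M]
    {u x y : M} (hu : IsUnit u) (hx : u * x = 1 ∨ u * x = -1) (hy : u * y = 1 ∨ u * y = -1) :
    x = y ∨ x = -y := by
  rcases hx with hx | hx <;> rcases hy with hy | hy <;> [left; right; right; left] <;>
    exact hu.mul_left_cancel (by simp [mul_neg, hx, hy])

/-- The `(1,1)` entry of `matE a * matE b` is `-1`, so the minus sign can only occur when `2 = 0`. -/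
lemma eq_of_matE_mul_matE_eq_or_eq_neg {a b c d : ZMod N}
    (h : matE a * matE b = matE c * matE d ∨ matE a * matE b = -(matE c * matE d)) :
    a = c ∧ b = d := by
  rcases h with h | h
  · have h01 := congr_fun₂ h 0 1
    have h10 := congr_fun₂ h 1 0
    simp [matE] at h01 h10
    exact ⟨h01, h10⟩
  · have h01 := congr_fun₂ h 0 1
    have h10 := congr_fun₂ h 1 0
    have h11 := congr_fun₂ h 1 1
    simp [matE] at h01 h10 h11
    exact ⟨by linear_combination -h01 + c * h11, by linear_combination h10 + d * h11⟩

lemma matE_mul_matE_ne [Nontrivial (ZMod N)] (a b c : ZMod N) :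
    ¬ (matE a * matE b = matE c ∨ matE a * matE b = -matE c) := by
  rintro (h | h) <;>
  · have h11 := congr_fun₂ h 1 1
    simp [matE] at h11

lemma not_isMonSol_one [Nontrivial (ZMod N)] (k : ZMod N) : ¬ isMonSol k 1 := by
  rintro (h | h) <;>
  · have h10 := congr_fun₂ h 1 0
    simp [matE] at h10

lemma isMonSol.mul {k : ZMod N} {n : ℕ} (h : isMonSol k n) (m : ℕ) : isMonSol k (n * m) := by
  rcases h with h | h
  · exact .inl (by rw [pow_mul, h, one_pow])
  · rw [isMonSol, pow_mul, h]
    exact neg_one_pow_eq_or _ m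

lemma matE_mul_matE_eq_pow_of_isSolL {a b k : ZMod N} {i r : ℕ}
    (hsol : IsSolL (a :: (List.replicate i k ++ [b]))) (hpow : isMonSol k (i + r)) :
    matE a * matE b = matE k ^ r ∨ matE a * matE b = -matE k ^ r := by
  have hrot : matE k ^ i * (matE a * matE b) = 1 ∨ matE k ^ i * (matE a * matE b) = -1 := by
    rw [← mul_assoc]
    apply mul_comm_of_mul_eq_one_or_neg_one
    rwa [← mul_assoc, ← Mlist_cons_replicate_append]
  rw [isMonSol, pow_add] at hpow
  exact eq_or_eq_neg_of_mul_eq_one_or_neg_one ((isUnit_matE k).pow i) hrot hpow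

theorem stmt12 (N : ℕ) (hN : 2 ≤ N) (k : ZMod N) (n : ℕ)
    (hn : minMonSize k n) (m : ℕ) (hm : 1 ≤ m) :
    (∀ a b : ZMod N,
        IsSolL (a :: (List.replicate (n * m - 2) k ++ [b])) → a = k ∧ b = k) ∧
    (∀ a b : ZMod N,
        ¬ IsSolL (a :: (List.replicate (n * m - 1) k ++ [b]))) ∧
    (∀ a b : ZMod N,
        IsSolL (a :: (List.replicate (n * m) k ++ [b])) → a = 0 ∧ b = 0) := by
  have : Fact (1 < N) := ⟨hN⟩
  obtain ⟨hn_pos, hsol, -⟩ := hn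
  have hn2 : 2 ≤ n := by
    by_contra! h
    obtain rfl : n = 1 := by omega
    exact not_isMonSol_one k hsol
  have hnm : 2 ≤ n * m := le_mul_of_le_of_one_le hn2 hm
  have hsol_nm := hsol.mul m
  refine ⟨fun a b h => ?_, fun a b h => ?_, fun a b h => ?_⟩
  · apply eq_of_matE_mul_matE_eq_or_eq_neg
    rw [← pow_two]
    exact matE_mul_matE_eq_pow_of_isSolL h (by rwa [Nat.sub_add_cancel hnm])
  · apply matE_mul_matE_ne a b k
    simpa using matE_mul_matE_eq_pow_of_isSolL h (r := 1) (by rwa [Nat.sub_add_cancel (by omega)])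
  · apply eq_of_matE_mul_matE_eq_or_eq_neg
    rw [matE_zero_mul_matE_zero, neg_neg]
    simpa [or_comm] using matE_mul_matE_eq_pow_of_isSolL h (r := 0) hsol_nm
end

section
/- Let p be an odd prime with p ≡ 1 (mod 3), let N = 3p, and let k = p + 2. Then the size of the k̄-monomial minimal solution modulo N is exactly 4p. -/
/-! Work modulo the coprime factors 3 and `p` of `N`. Modulo 3, `k̄ = 0` and `matE 0` has
order 4. Modulo `p`, `k̄ = 2` and `matE 2` is unipotent: `matE 2 ^ m = 1 + m • [[1, -1], [1, -1]]`,
so its order is `p`, and it is never `-1` because `p` is odd. By the Chinese remainder theorem,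
`matE k̄ ^ m = 1` exactly when `4p ∣ m`, and `matE k̄ ^ m = -1` never holds. -/

lemma matE_pow_map {N M : ℕ} (f : ZMod N →+* ZMod M) (a : ZMod N) (m : ℕ) :
    (matE a ^ m).map f = matE (f a) ^ m := by
  have hmap : (matE a).map f = matE (f a) := by
    ext i j
    fin_cases i <;> fin_cases j <;> simp [matE]
  rw [← hmap, ← RingHom.mapMatrix_apply, ← RingHom.mapMatrix_apply, map_pow]

lemma matE_two_pow {n : ℕ} (m : ℕ) :
    matE (2 : ZMod n) ^ m = !![(m : ZMod n) + 1, -(m : ZMod n); (m : ZMod n), 1 - m] := by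
  induction m with
  | zero => simp [Matrix.one_fin_two]
  | succ m ih =>
    rw [pow_succ, ih]
    ext i j
    fin_cases i <;> fin_cases j <;> simp [matE, Matrix.mul_apply] <;> ring

lemma matE_two_pow_eq_one_iff {n m : ℕ} : matE (2 : ZMod n) ^ m = 1 ↔ n ∣ m := by
  rw [matE_two_pow, ← ZMod.natCast_eq_zero_iff]
  constructor
  · intro h
    simpa using congr_fun₂ h 1 0
  · intro h
    rw [h, Matrix.one_fin_two]
    simp

lemma matE_two_pow_ne_neg_one {n : ℕ} (hn : 2 < n) (m : ℕ) : matE (2 : ZMod n) ^ m ≠ -1 := by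
  intro h
  rw [matE_two_pow] at h
  have h10 : (m : ZMod n) = 0 := by simpa using congr_fun₂ h 1 0
  have h00 : (m : ZMod n) + 1 = -1 := by simpa using congr_fun₂ h 0 0
  have htwo : ((2 : ℕ) : ZMod n) = 0 := by
    rw [h10] at h00
    push_cast
    linear_combination h00
  exact absurd (Nat.le_of_dvd two_pos ((ZMod.natCast_eq_zero_iff 2 n).mp htwo)) (by omega)

lemma orderOf_matE_zero_three : orderOf (matE (0 : ZMod 3)) = 4 :=
  orderOf_eq_prime_pow (p := 2) (n := 1) (by decide) (by decide)

lemma matE_zero_three_pow_eq_one_iff {m : ℕ} : matE (0 : ZMod 3) ^ m = 1 ↔ 4 ∣ m := by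
  rw [← orderOf_dvd_iff_pow_eq_one, orderOf_matE_zero_three]

lemma Matrix.eq_of_map_castHom_eq {ι : Type*} {m n : ℕ} (hmn : m.Coprime n)
    {A B : Matrix ι ι (ZMod (m * n))}
    (hm : A.map (ZMod.castHom (dvd_mul_right m n) (ZMod m)) =
      B.map (ZMod.castHom (dvd_mul_right m n) (ZMod m)))
    (hn : A.map (ZMod.castHom (dvd_mul_left n m) (ZMod n)) =
      B.map (ZMod.castHom (dvd_mul_left n m) (ZMod n))) :
    A = B := by
  ext i j
  apply (ZMod.chineseRemainder hmn).injective
  exact Prod.ext (by simpa [ZMod.chineseRemainder, Prod.fst_zmod_cast] using congr_fun₂ hm i j)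
    (by simpa [ZMod.chineseRemainder, Prod.snd_zmod_cast] using congr_fun₂ hn i j)

lemma minMonSize_of_pow_eq_one_iff {N r : ℕ} {k : ZMod N} (hr : 0 < r)
    (hone : ∀ m, matE k ^ m = 1 ↔ r ∣ m) (hneg : ∀ m, matE k ^ m ≠ -1) :
    minMonSize k r := by
  refine ⟨hr, Or.inl ((hone r).mpr dvd_rfl), fun m hm hsol => ?_⟩
  have hdvd : r ∣ m := (hone m).mp (hsol.resolve_right (hneg m))
  exact Nat.le_of_dvd hm hdvd

lemma minMonSize_of_castHom_eq {n : ℕ} (h3n : Nat.Coprime 3 n) (hodd : Odd n) (hn : 1 < n)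
    {k : ZMod (3 * n)} (hk3 : ZMod.castHom (dvd_mul_right 3 n) (ZMod 3) k = 0)
    (hkn : ZMod.castHom (dvd_mul_left n 3) (ZMod n) k = 2) :
    minMonSize k (4 * n) := by
  set f3 := ZMod.castHom (dvd_mul_right 3 n) (ZMod 3)
  set fn := ZMod.castHom (dvd_mul_left n 3) (ZMod n)
  have hmap3 (m : ℕ) : (matE k ^ m).map f3 = matE 0 ^ m := by rw [matE_pow_map, hk3]
  have hmapn (m : ℕ) : (matE k ^ m).map fn = matE 2 ^ m := by rw [matE_pow_map, hkn]
  have hone3 : (1 : Matrix (Fin 2) (Fin 2) _).map f3 = 1 :=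
    Matrix.map_one _ (map_zero f3) (map_one f3)
  have honen : (1 : Matrix (Fin 2) (Fin 2) _).map fn = 1 :=
    Matrix.map_one _ (map_zero fn) (map_one fn)
  have hpow_eq_one (m : ℕ) : matE k ^ m = 1 ↔ 4 * n ∣ m := by
    constructor
    · intro h
      have h4 : 4 ∣ m := matE_zero_three_pow_eq_one_iff.mp (by rw [← hmap3, h, hone3])
      have hn : n ∣ m := matE_two_pow_eq_one_iff.mp (by rw [← hmapn, h, honen])
      exact (Nat.Coprime.pow_left 2 (Nat.coprime_two_left.mpr hodd)).mul_dvd_of_dvd_of_dvd h4 hn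
    · intro h
      exact Matrix.eq_of_map_castHom_eq h3n
        (by rw [hmap3, hone3, matE_zero_three_pow_eq_one_iff.mpr (dvd_of_mul_right_dvd h)])
        (by rw [hmapn, honen, matE_two_pow_eq_one_iff.mpr (dvd_of_mul_left_dvd h)])
  refine minMonSize_of_pow_eq_one_iff (by omega) hpow_eq_one fun m h => ?_
  have hneg : (matE k ^ m).map fn = -1 := by
    rw [h, Matrix.map_neg _ (map_neg fn), honen]
  exact matE_two_pow_ne_neg_one (by obtain ⟨j, rfl⟩ := hodd; omega) m (hmapn m ▸ hneg)

theorem stmt13 (p : ℕ) (hp : p.Prime) (hodd : Odd p) (hp3 : p % 3 = 1) :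
    minMonSize (((p : ℤ) + 2 : ℤ) : ZMod (3 * p)) (4 * p) := by
  have h3p : Nat.Coprime 3 p := (Nat.coprime_primes Nat.prime_three hp).mpr (by omega)
  refine minMonSize_of_castHom_eq h3p hodd hp.one_lt ?_ ?_
  · have hp_mod3 : (p : ZMod 3) = 1 := by rw [← ZMod.natCast_mod, hp3, Nat.cast_one]
    rw [map_intCast]
    push_cast
    rw [hp_mod3]
    decide
  · rw [map_intCast]
    push_cast
    rw [ZMod.natCast_self, zero_add]
end

section
/- Let N ≥ 2 not be divisible by 3, and suppose for some integer k the k̄-monomial minimal solution modulo N has size 6, i.e. M₆(k̄,...,k̄) = ±Id with minimal size 6. Then this solution is irreducible. -/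
lemma negone {N : ℕ} : (-1 : Matrix (Fin 2) (Fin 2) (ZMod N)) = !![-1,0;0,-1] := by
  rw [← neg_one_smul (ZMod N) (1 : Matrix (Fin 2) (Fin 2) (ZMod N)), Matrix.one_fin_two,
    Matrix.smul_of, Matrix.smul_cons, Matrix.smul_cons]
  norm_num

lemma pow6 {N : ℕ} (k : ZMod N) : matE k ^ 6 =
    !![k^6-5*k^4+6*k^2-1, -(k^5-4*k^3+3*k); k^5-4*k^3+3*k, -(k^4-3*k^2+1)] := by
  simp only [matE, pow_succ, pow_zero, one_mul, Matrix.mul_fin_two]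
  congr 1 <;> ring

lemma mon0 {N : ℕ} : matE (0 : ZMod N) ^ 2 = -1 := by
  simp only [matE, pow_succ, pow_zero, one_mul, Matrix.mul_fin_two, negone]; norm_num

lemma mon1 {N : ℕ} : matE (1 : ZMod N) ^ 3 = -1 := by
  simp only [matE, pow_succ, pow_zero, one_mul, Matrix.mul_fin_two, negone]; norm_num

lemma monm1 {N : ℕ} : matE (-1 : ZMod N) ^ 3 = 1 := by
  simp only [matE, pow_succ, pow_zero, one_mul, Matrix.mul_fin_two, Matrix.one_fin_two]; norm_num

theorem stmt19 (N : ℕ) (hN : 2 ≤ N) (h3 : ¬ 3 ∣ N) (k : ZMod N)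
    (hk : minMonSize k 6) :
    ¬ Reducible (List.replicate 6 k) := by
  obtain ⟨-, hsol6, hmin⟩ := hk
  -- consequences of minimality at sizes 2 and 3
  have not0 : k ≠ 0 := fun h => by
    have := hmin 2 (by norm_num) (Or.inr (by rw [h]; exact mon0)); omega
  have not1 : k ≠ 1 := fun h => by
    have := hmin 3 (by norm_num) (Or.inr (by rw [h]; exact mon1)); omega
  have notm1 : k ≠ -1 := fun h => by
    have := hmin 3 (by norm_num) (Or.inl (by rw [h]; exact monm1)); omega
  -- p6 = 0
  have h6 : k^5 - 4*k^3 + 3*k = 0 := by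
    rcases hsol6 with h | h <;> rw [pow6] at h <;>
      simpa using congrFun (congrFun h 1) 0
  rintro ⟨a, b, ha, hb, hbsol, heq⟩
  have hre : oplus a b = List.replicate 6 k := by
    rcases heq with ⟨i, hi⟩ | ⟨i, hi⟩
    · rwa [List.rotate_replicate] at hi
    · rwa [List.reverse_replicate, List.rotate_replicate] at hi
  have hlen : (oplus a b).length = 6 := by rw [hre]; simp
  simp only [oplus, List.length_cons, List.length_append, List.length_dropLast,
    List.length_tail] at hlen
  -- destructure b
  obtain ⟨x, t, rfl⟩ : ∃ x t, b = x :: t := by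
    cases b with
    | nil => simp at hb
    | cons x t => exact ⟨x, t, rfl⟩
  rcases List.eq_nil_or_concat t with rfl | ⟨s, y, rfl⟩
  · simp at hb
  have hmid : ∀ z ∈ s, z = k := by
    intro z hz
    have hz2 : z ∈ oplus a (x :: s.concat y) := by
      have hz' : z ∈ (s.concat y).dropLast := by
        rw [List.concat_eq_append, List.dropLast_concat]; exact hz
      simp only [oplus, List.tail_cons, List.mem_cons, List.mem_append]
      tauto
    rw [hre] at hz2
    exact List.eq_of_mem_replicate hz2
  have hslen : s.length ≤ 3 ∧ 1 ≤ s.length := by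
    simp only [List.concat_eq_append, List.length_append, List.length_cons,
      List.length_nil] at hlen hb ⊢
    omega
  clear hlen hre hb heq
  rcases s with _ | ⟨s0, _ | ⟨s1, _ | ⟨s2, _ | ⟨s3, s'⟩⟩⟩⟩
  · simp at hslen
  · -- b = [x, k, y]
    rw [hmid s0 (by simp)] at hbsol
    have hk' : k = 1 ∨ k = -1 := by
      rcases hbsol with h | h
      · have e := congrFun (congrFun h 1) 1
        simp [Mlist, matE, Matrix.mul_fin_two, Matrix.one_fin_two] at e
        right; linear_combination -e
      · have e := congrFun (congrFun h 1) 1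
        simp [Mlist, matE, Matrix.mul_fin_two, negone] at e
        left; linear_combination e
    tauto
  · -- b = [x, k, k, y]
    rw [hmid s0 (by simp)] at hbsol
    rw [hmid s1 (by simp)] at hbsol
    have hk0 : k = 0 := by
      rcases hbsol with h | h
      · have e := congrFun (congrFun h 1) 1
        simp [Mlist, matE, Matrix.mul_fin_two, Matrix.one_fin_two] at e
        -- k^2 = 0
        have hk2 : k^2 = 0 := by linear_combination e
        have h3k : (3:ZMod N)*k = 0 := by linear_combination h6 - (k^3-4*k)*hk2
        haveI : NeZero N := ⟨by omega⟩
        have hu : IsUnit (3 : ZMod N) := by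
          have hc : Nat.Coprime 3 N := (Nat.prime_three.coprime_iff_not_dvd).2 h3
          have := (ZMod.isUnit_iff_coprime 3 N).2 hc
          simpa using this
        exact (hu.mul_right_eq_zero).1 h3k
      · have e := congrFun (congrFun h 1) 1
        simp [Mlist, matE, Matrix.mul_fin_two, negone] at e
        have hk2 : k^2 = 2 := by linear_combination -e
        linear_combination -h6 + k*(k^2-2)*hk2
    exact not0 hk0
  · -- b = [x, k, k, k, y]
    rw [hmid s0 (by simp)] at hbsol
    rw [hmid s1 (by simp)] at hbsol
    rw [hmid s2 (by simp)] at hbsol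
    have hk' : k = 1 ∨ k = -1 := by
      rcases hbsol with h | h
      · have e := congrFun (congrFun h 1) 1
        simp [Mlist, matE, Matrix.mul_fin_two, Matrix.one_fin_two] at e
        have h1 : k^3 - 2*k = -1 := by linear_combination -e
        left; linear_combination (1+(1-k)*(k^2-2))*h1 - (1-k)*h6
      · have e := congrFun (congrFun h 1) 1
        simp [Mlist, matE, Matrix.mul_fin_two, negone] at e
        have h1 : k^3 - 2*k = 1 := by linear_combination -e
        right; linear_combination (1+(k+1)*(k^2-2))*h1 - (k+1)*h6
    tauto
  · simp at hslen; omega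
end
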